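/- Let n ≥ 2. The transpose map T : H_r^n → H_c^n is a surjective linear isometry between Hilbert C*-modules that is not a triple homomorphism: there exist x, y, z ∈ H_r^n with T(x⟨y,z⟩) ≠ Tx⟨Ty, Tz⟩. -/

import Mathlib

open Matrix
open scoped Matrix.Norms.L2Operator

/-!
For a matrix `A` supported in row `r`, `A * Aᴴ` is the scalar `(A * Aᴴ) r r` placed at `(r, r)`,
so the C*-identity `‖Aᴴ * A‖ = ‖A‖ ^ 2 = ‖A * Aᴴ‖` makes the transpose isometric. It is not a
triple homomorphism because the right-module actions differ: with `x = E₀₁` and `y = z = E₀₀`,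
`x ⟨y, z⟩ = E₀₁ E₀₀ = 0` in `H_r`, whereas `⟨Ty, Tz⟩ = 1` in `H_c`, so `Tx ⟨Ty, Tz⟩ = E₁₀ ≠ 0`.
-/

namespace Matrix

variable {m n α : Type*}

def SupportedInRow [Zero α] (r : m) (A : Matrix m n α) : Prop :=
  ∀ i j, i ≠ r → A i j = 0

lemma supportedInRow_single [DecidableEq m] [DecidableEq n] [Zero α] (r : m) (j : n) (a : α) :
    SupportedInRow r (single r j a) :=
  fun _ _ hi => single_apply_of_row_ne hi.symm _ _ _

lemma SupportedInRow.mul_conjTranspose_eq_single [Fintype n] [DecidableEq m]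
    [NonUnitalSemiring α] [StarRing α] {r : m} {A : Matrix m n α} (hA : SupportedInRow r A) :
    A * Aᴴ = single r r ((A * Aᴴ) r r) := by
  ext i j
  by_cases hi : i = r
  · by_cases hj : j = r
    · subst hi hj
      simp
    · simp [mul_apply, hA j _ hj, Ne.symm hj]
  · simp [mul_apply, hA i _ hi, Ne.symm hi]

lemma transpose_conjTranspose_mul_transpose_apply_self [Fintype n] [CommSemiring α]
    [StarRing α] (A : Matrix m n α) (r : m) : (Aᵀᴴ * Aᵀ) r r = (A * Aᴴ) r r := by
  rw [conjTranspose_transpose_eq_transpose_conjTranspose, ← transpose_mul, transpose_apply]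

lemma SupportedInRow.l2_opNorm_conjTranspose_mul_self {𝕜 : Type*} [RCLike 𝕜] [Fintype m]
    [Fintype n] [DecidableEq m] [DecidableEq n] {r : m} {A : Matrix m n 𝕜}
    (hA : SupportedInRow r A) : ‖Aᴴ * A‖ = ‖(A * Aᴴ) r r‖ :=
  calc ‖Aᴴ * A‖ = ‖Aᴴᴴ * Aᴴ‖ := by
        rw [Matrix.l2_opNorm_conjTranspose_mul_self, Matrix.l2_opNorm_conjTranspose_mul_self,
          l2_opNorm_conjTranspose]
    _ = ‖single r r ((A * Aᴴ) r r)‖ := by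
        rw [conjTranspose_conjTranspose, ← hA.mul_conjTranspose_eq_single]
    _ = ‖(A * Aᴴ) r r‖ := by rw [← diagonal_single, l2_opNorm_diagonal, Pi.norm_single]

lemma exists_supportedInRow_mul_conjTranspose_mul_ne [Fintype m] [DecidableEq m] [Semiring α]
    [StarRing α] [Nontrivial α] {r s : m} (hrs : r ≠ s) :
    ∃ x y z : Matrix m m α, SupportedInRow r x ∧ SupportedInRow r y ∧ SupportedInRow r z ∧
      (x * (yᴴ * z))ᵀ ≠ (yᵀᴴ * zᵀ) r r • xᵀ := by
  refine ⟨single r s 1, single r r 1, single r r 1, supportedInRow_single _ _ _,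
    supportedInRow_single _ _ _, supportedInRow_single _ _ _, ?_⟩
  simp only [conjTranspose_single, transpose_single, star_one, mul_one, single_mul_single_same]
  rw [single_mul_single_of_ne _ _ _ _ hrs.symm, transpose_zero, single_apply_same, one_smul]
  exact fun h => one_ne_zero (α := α) (by simpa using congrFun₂ h.symm s r)

end Matrix

/-- For `n ≥ 2`, the transpose map `T : H_r^n → H_c^n` is a surjective linear isometry between
Hilbert C*-modules which is not a triple homomorphism: there are `x, y, z ∈ H_r^n` with
`T (x⟨y,z⟩) ≠ Tx⟨Ty,Tz⟩`.  Here `⟨A,B⟩ = Aᴴ * B` on `H_r^n`, while on `H_c^n` the inner product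
is the `(0,0)` entry of `Aᴴ * B`, acting by scalar multiplication. -/
theorem transpose_row_to_column_not_triple_hom
    (n : ℕ) (hn : 2 ≤ n) :
    -- `T` maps the row space into the column space
    (∀ A : Matrix (Fin n) (Fin n) ℂ, (∀ i j, i ≠ (⟨0, by omega⟩ : Fin n) → A i j = 0) →
      ∀ i j, j ≠ (⟨0, by omega⟩ : Fin n) → Aᵀ i j = 0) ∧
    -- `T` is linear
    (∀ (c : ℂ) (A B : Matrix (Fin n) (Fin n) ℂ), (c • A + B)ᵀ = c • Aᵀ + Bᵀ) ∧
    -- `T` is surjective onto the column space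
    (∀ C : Matrix (Fin n) (Fin n) ℂ, (∀ i j, j ≠ (⟨0, by omega⟩ : Fin n) → C i j = 0) →
      ∃ A : Matrix (Fin n) (Fin n) ℂ,
        (∀ i j, i ≠ (⟨0, by omega⟩ : Fin n) → A i j = 0) ∧ Aᵀ = C) ∧
    -- `T` is isometric for the Hilbert C*-module norms
    (∀ A : Matrix (Fin n) (Fin n) ℂ, (∀ i j, i ≠ (⟨0, by omega⟩ : Fin n) → A i j = 0) →
      Real.sqrt ‖(Aᵀᴴ * Aᵀ) (⟨0, by omega⟩ : Fin n) (⟨0, by omega⟩ : Fin n)‖ =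
        Real.sqrt ‖Aᴴ * A‖) ∧
    -- `T` is not a triple homomorphism
    (∃ x y z : Matrix (Fin n) (Fin n) ℂ,
      (∀ i j, i ≠ (⟨0, by omega⟩ : Fin n) → x i j = 0) ∧
      (∀ i j, i ≠ (⟨0, by omega⟩ : Fin n) → y i j = 0) ∧
      (∀ i j, i ≠ (⟨0, by omega⟩ : Fin n) → z i j = 0) ∧
      (x * (yᴴ * z))ᵀ ≠
        ((yᵀᴴ * zᵀ) (⟨0, by omega⟩ : Fin n) (⟨0, by omega⟩ : Fin n)) • xᵀ) := by
  refine ⟨fun A hA i j hj => hA j i hj, fun c A B => by rw [transpose_add, transpose_smul],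
    fun C hC => ⟨Cᵀ, fun i j hi => hC j i hi, transpose_transpose C⟩, fun A hA => ?_, ?_⟩
  · rw [transpose_conjTranspose_mul_transpose_apply_self,
      SupportedInRow.l2_opNorm_conjTranspose_mul_self hA]
  · exact exists_supportedInRow_mul_conjTranspose_mul_ne (s := ⟨1, by omega⟩) (by simp)
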